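/- Let τ be a Hermitian unital linear functional on ℂ⟨x⟩ and 1 ≤ n′ < n. Then η_{orb,R}(τ) ≤ η_{orb,R}(τ restricted to ℂ⟨x_1, …, x_{n′}⟩) + η_{orb,R}(τ restricted to ℂ⟨x_{n′+1}, …, x_n⟩), where the two right-hand quantities are the orbital η-entropies of the sub-systems of variables x_1, …, x_{n′} and x_{n′+1}, …, x_n respectively, with the same cut-off R (conventions: (−∞) + a = −∞). -/

import Mathlib

/-!
Orbital free pressure and its Legendre transform (Hiai–Ueda).

Common infrastructure: the free unital complex *-algebra on self-adjoint generators,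
matrix microstate sets, the orbital free pressure, the orbital η-entropy, the orbital
free entropy; Lebesgue measure on self-adjoint matrices, the free pressure, free
entropy and η-entropy; Gibbs (micro-)ensembles.

The Haar probability measures `γ_{U(N)}` on the unitary groups are formalized as a
family of left-invariant Borel probability measures (which uniquely determines them).
-/

open MeasureTheory Filter Topology
open scoped BigOperators ENNReal TensorProduct ComplexOrder

noncomputable section

namespace OrbFP

/-- The algebra of `N × N` complex matrices. -/
abbrev Mat (N : ℕ) := Matrix (Fin N) (Fin N) ℂ

/-- The normalized trace `tr_N`. -/
def trN (N : ℕ) (A : Mat N) : ℂ := A.trace / (N : ℂ)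

/-- The (ℓ²-)operator norm of a matrix. -/
def opNorm {N : ℕ} (A : Mat N) : ℝ := ‖Matrix.toEuclideanCLM (𝕜 := ℂ) A‖

/-- The unitary group `U(N)`. -/
abbrev UN (N : ℕ) := Matrix.unitaryGroup (Fin N) ℂ

instance (N : ℕ) : MeasurableSpace (UN N) := borel _
instance (N : ℕ) : BorelSpace (UN N) := ⟨rfl⟩
instance (N : ℕ) : MeasurableSpace (Mat N) := borel _
instance (N : ℕ) : BorelSpace (Mat N) := ⟨rfl⟩

/-- The free unital complex *-algebra on self-adjoint generators indexed by `X`. -/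
abbrev FAlg (X : Type) := FreeAlgebra ℂ X

/-- Coefficient-wise complex conjugation on the free algebra. -/
def conjCoeff {X : Type} (p : FAlg X) : FAlg X :=
  (FreeAlgebra.equivMonoidAlgebraFreeMonoid (R := ℂ) (X := X)).symm
    (MonoidAlgebra.ofCoeff (Finsupp.mapRange (starRingEnd ℂ) (map_zero _)
      (FreeAlgebra.equivMonoidAlgebraFreeMonoid (R := ℂ) (X := X) p).coeff))

/-- The star operation of the free complex *-algebra with self-adjoint generators:
reverse words (the `star` of `FreeAlgebra`) and conjugate the coefficients. -/
def fstar {X : Type} (p : FAlg X) : FAlg X := star (conjCoeff p)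

/-- Self-adjointness in the free complex *-algebra. -/
def IsSA {X : Type} (p : FAlg X) : Prop := fstar p = p

/-- A Hermitian unital linear functional. -/
def IsHermState {X : Type} (τ : FAlg X →ₗ[ℂ] ℂ) : Prop :=
  τ 1 = 1 ∧ ∀ p, τ (fstar p) = starRingEnd ℂ (τ p)

/-- Ordered product of a word of matrices. -/
def wordMat {N : ℕ} {κ : Type} (A : κ → Mat N) (w : List κ) : Mat N := (w.map A).prod

/-- Ordered product of a word of generators in the free algebra. -/
def wordAlg {κ : Type} (w : List κ) : FAlg κ := (w.map (FreeAlgebra.ι ℂ)).prod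

/-- The microstate set `Γ_R(τ; N, m, δ)` of a functional on the free algebra on `κ`:
tuples of self-adjoint matrices of operator norm at most `R` whose normalized trace of
every word of length `1 ≤ l ≤ m` is `δ`-close to the corresponding moment of `τ`. -/
def microSet {κ : Type} (R : ℝ) (τ : FAlg κ →ₗ[ℂ] ℂ) (N m : ℕ) (δ : ℝ) :
    Set (κ → Mat N) :=
  {A | (∀ j, (A j).IsHermitian ∧ opNorm (A j) ≤ R) ∧
    ∀ w : List κ, w ≠ [] → w.length ≤ m →
      ‖trN N (wordMat A w) - τ (wordAlg w)‖ < δ}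

/-- `τ` has finite-dimensional approximants. -/
def HasFDA {κ : Type} (R : ℝ) (τ : FAlg κ →ₗ[ℂ] ℂ) : Prop :=
  ∀ (m : ℕ) (δ : ℝ), 0 < δ → ∃ N, (microSet R τ N m δ).Nonempty

variable {ι : Type} [Fintype ι]

/-- The index of the generators `x_{ij}`, `i ∈ ι`, `1 ≤ j ≤ r i`. -/
abbrev gen (r : ι → ℕ) := Σ i : ι, Fin (r i)

/-- Evaluation of the full free algebra at a family of matrix tuples. -/
def evalA {r : ι → ℕ} {N : ℕ} (A : ∀ i, Fin (r i) → Mat N) :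
    FAlg (gen r) →ₐ[ℂ] Mat N :=
  FreeAlgebra.lift ℂ fun p : gen r => A p.1 p.2

/-- The canonical embedding `ℂ⟨x_i⟩ → ℂ⟨x⟩`. -/
def inclAlg (r : ι → ℕ) (i : ι) : FAlg (Fin (r i)) →ₐ[ℂ] FAlg (gen r) :=
  FreeAlgebra.lift ℂ fun j => FreeAlgebra.ι ℂ (⟨i, j⟩ : gen r)

/-- The restriction of a functional on `ℂ⟨x⟩` to `ℂ⟨x_i⟩`. -/
def restr {r : ι → ℕ} (τ : FAlg (gen r) →ₗ[ℂ] ℂ) (i : ι) :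
    FAlg (Fin (r i)) →ₗ[ℂ] ℂ :=
  τ ∘ₗ (inclAlg r i).toLinearMap

/-- The embedding of the free algebra of a sub-system of the variables. -/
def inclSub {r : ι → ℕ} (P : ι → Prop) :
    FAlg (gen fun i : Subtype P => r i.1) →ₐ[ℂ] FAlg (gen r) :=
  FreeAlgebra.lift ℂ fun p => FreeAlgebra.ι ℂ (⟨p.1.1, p.2⟩ : gen r)

/-- Restriction of a functional to a sub-system of the variables. -/
def restrSub {r : ι → ℕ} (P : ι → Prop) (τ : FAlg (gen r) →ₗ[ℂ] ℂ) :
    FAlg (gen fun i : Subtype P => r i.1) →ₗ[ℂ] ℂ :=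
  τ ∘ₗ (inclSub P).toLinearMap

/-- The conjugated family `(V_i A_i V_i^*)_i`. -/
def conjFam {r : ι → ℕ} {N : ℕ} (V : ι → UN N) (A : ∀ i, Fin (r i) → Mat N) :
    ∀ i, Fin (r i) → Mat N :=
  fun i j => (V i : Mat N) * A i j * star (V i : Mat N)

/-- The Gibbs weight `exp(-N² tr_N(h((V_i A_i V_i^*)_i)))`. -/
def gibbsWt {r : ι → ℕ} {N : ℕ} (h : FAlg (gen r)) (A : ∀ i, Fin (r i) → Mat N)
    (V : ι → UN N) : ℝ :=
  Real.exp (-(N : ℝ) ^ 2 * (trN N (evalA (conjFam V A) h)).re)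

/-- The product `∏_i Γ_R(τ_i; N, m, δ)` of the microstate sets. -/
def microProd (R : ℝ) {r : ι → ℕ} (τs : ∀ i, FAlg (Fin (r i)) →ₗ[ℂ] ℂ)
    (N m : ℕ) (δ : ℝ) : Set (∀ i, Fin (r i) → Mat N) :=
  {A | ∀ i, A i ∈ microSet R (τs i) N m δ}

/-- The finite-`N` orbital free pressure `π_{orb,R}(h : (τ_i); N, m, δ)`
(`-∞` when some microstate set is empty). -/
def piOrbN (γ : ∀ N, Measure (UN N)) (R : ℝ) {r : ι → ℕ} (h : FAlg (gen r))
    (τs : ∀ i, FAlg (Fin (r i)) →ₗ[ℂ] ℂ) (N m : ℕ) (δ : ℝ) : EReal :=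
  ⨆ A ∈ microProd R τs N m δ,
    ((Real.log (∫ V : ι → UN N, gibbsWt h A V ∂(Measure.pi fun _ => γ N)) : ℝ) : EReal)

/-- The orbital free pressure `π_{orb,R}(h : (τ_i))`. -/
def piOrb (γ : ∀ N, Measure (UN N)) (R : ℝ) {r : ι → ℕ} (h : FAlg (gen r))
    (τs : ∀ i, FAlg (Fin (r i)) →ₗ[ℂ] ℂ) : EReal :=
  ⨅ (m : ℕ) (δ : ℝ) (_ : 0 < δ),
    Filter.limsup
      (fun N : ℕ => ((((N : ℝ) ^ 2)⁻¹ : ℝ) : EReal) * piOrbN γ R h τs N m δ)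
      Filter.atTop

/-- The "universal" `R`-norm `‖h‖_R`: the supremum of the operator norms of all
evaluations of `h` at families of self-adjoint matrices of norm at most `R`. -/
def normR (R : ℝ) {r : ι → ℕ} (h : FAlg (gen r)) : ℝ :=
  sSup {t : ℝ | ∃ (N : ℕ) (A : ∀ i, Fin (r i) → Mat N),
    (∀ i j, (A i j).IsHermitian ∧ opNorm (A i j) ≤ R) ∧ t = opNorm (evalA A h)}

/-- The minus Legendre transform `inf_h (φ(h) + π_{orb,R}(h : (τ_i)))` of the orbital
free pressure, relative to `(τ_i)`. -/
def etaOrbRel (γ : ∀ N, Measure (UN N)) (R : ℝ) {r : ι → ℕ}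
    (τ : FAlg (gen r) →ₗ[ℂ] ℂ) (τs : ∀ i, FAlg (Fin (r i)) →ₗ[ℂ] ℂ) : EReal :=
  ⨅ (h : FAlg (gen r)) (_ : IsSA h),
    (((τ h).re : ℝ) : EReal) + piOrb γ R h τs

/-- The orbital `η`-entropy `η_{orb,R}(τ)`. -/
def etaOrb (γ : ∀ N, Measure (UN N)) (R : ℝ) {r : ι → ℕ}
    (τ : FAlg (gen r) →ₗ[ℂ] ℂ) : EReal :=
  etaOrbRel γ R τ (restr τ)

/-- The microstate set `Γ_R(τ; N, m, δ)` of a functional on the full free algebra. -/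
def microFull (R : ℝ) {r : ι → ℕ} (τ : FAlg (gen r) →ₗ[ℂ] ℂ) (N m : ℕ) (δ : ℝ) :
    Set (∀ i, Fin (r i) → Mat N) :=
  {A | (∀ i j, (A i j).IsHermitian ∧ opNorm (A i j) ≤ R) ∧
    ∀ w : List (gen r), w ≠ [] → w.length ≤ m →
      ‖trN N (wordMat (fun p : gen r => A p.1 p.2) w) - τ (wordAlg w)‖ < δ}

/-- `τ` (on the full algebra) has finite-dimensional approximants. -/
def HasFDAFull (R : ℝ) {r : ι → ℕ} (τ : FAlg (gen r) →ₗ[ℂ] ℂ) : Prop :=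
  ∀ (m : ℕ) (δ : ℝ), 0 < δ → ∃ N, (microFull R τ N m δ).Nonempty

/-- The orbital microstate set `Γ_orb(τ : (A_i); N, m, δ)`. -/
def orbSet (R : ℝ) {r : ι → ℕ} (τ : FAlg (gen r) →ₗ[ℂ] ℂ) {N : ℕ}
    (A : ∀ i, Fin (r i) → Mat N) (m : ℕ) (δ : ℝ) : Set (ι → UN N) :=
  {V | conjFam V A ∈ microFull R τ N m δ}

/-- The orbital free entropy `χ_{orb,R}(τ)`. -/
def chiOrb (γ : ∀ N, Measure (UN N)) (R : ℝ) {r : ι → ℕ}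
    (τ : FAlg (gen r) →ₗ[ℂ] ℂ) : EReal :=
  ⨅ (m : ℕ) (δ : ℝ) (_ : 0 < δ),
    Filter.limsup
      (fun N : ℕ => ((((N : ℝ) ^ 2)⁻¹ : ℝ) : EReal) *
        ⨆ A ∈ microProd R (restr τ) N m δ,
          ENNReal.log ((Measure.pi fun _ : ι => γ N) (orbSet R τ A m δ)))
      Filter.atTop

/-- A tracial `R₀`-state on `ℂ⟨x⟩`. -/
def IsTracialRState {r : ι → ℕ} (R₀ : ℝ) (τ : FAlg (gen r) →ₗ[ℂ] ℂ) : Prop :=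
  IsHermState τ ∧ (∀ p q, τ (p * q) = τ (q * p)) ∧
  (∀ p, 0 ≤ (τ (fstar p * p)).re) ∧
  ∀ (i : ι) (j : Fin (r i)) (k : ℕ) (p : FAlg (gen r)),
    (τ (fstar p * FreeAlgebra.ι ℂ (⟨i, j⟩ : gen r) ^ (2 * k) * p)).re
      ≤ R₀ ^ (2 * k) * (τ (fstar p * p)).re

/-- `τ` is the free product of its restrictions `τ_i`: alternating words in the
`τ`-centered subalgebras `ℂ⟨x_i⟩` have vanishing `τ`-value. -/
def IsFreeProduct {r : ι → ℕ} (τ : FAlg (gen r) →ₗ[ℂ] ℂ) : Prop :=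
  ∀ (k : ℕ), 0 < k → ∀ (idx : Fin k → ι) (p : ∀ l, FAlg (Fin (r (idx l)))),
    (∀ l, τ (inclAlg r (idx l) (p l)) = 0) →
    (∀ (l : Fin k) (hl : (l : ℕ) + 1 < k), idx l ≠ idx ⟨(l : ℕ) + 1, hl⟩) →
    τ ((List.ofFn fun l => inclAlg r (idx l) (p l)).prod) = 0

/-- The partition function `Z_N^{(h, Ξ(N))}` of the orbital Gibbs micro-ensemble. -/
def ZOrbN (γ : ∀ N, Measure (UN N)) {r : ι → ℕ} (h : FAlg (gen r)) {N : ℕ}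
    (A : ∀ i, Fin (r i) → Mat N) : ℝ :=
  ∫ V : ι → UN N, gibbsWt h A V ∂(Measure.pi fun _ => γ N)

/-- The orbital Gibbs micro-ensemble `μ_N^{(h, Ξ(N))}`. -/
def muOrbN (γ : ∀ N, Measure (UN N)) {r : ι → ℕ} (h : FAlg (gen r)) {N : ℕ}
    (A : ∀ i, Fin (r i) → Mat N) : Measure (ι → UN N) :=
  (Measure.pi fun _ => γ N).withDensity
    fun V => ENNReal.ofReal (gibbsWt h A V / ZOrbN γ h A)

/-! ### Lebesgue measure on self-adjoint matrices and one-variable quantities -/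

/-- The parametrization of self-adjoint matrices by the diagonal entries and the real
and imaginary parts of the above-diagonal entries. -/
def matOfCoord (N : ℕ) (f : Fin N × Fin N → ℝ) : Mat N :=
  Matrix.of fun p q =>
    if p = q then (f (p, p) : ℂ)
    else if p < q then (f (p, q) : ℂ) + (f (q, p) : ℂ) * Complex.I
    else (f (q, p) : ℂ) - (f (p, q) : ℂ) * Complex.I

/-- The Lebesgue measure `Λ_N` on self-adjoint `N × N` matrices. -/
def LambdaMat (N : ℕ) : Measure (Mat N) :=
  Measure.map (matOfCoord N) (volume : Measure (Fin N × Fin N → ℝ))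

/-- The product Lebesgue measure `Λ_N^{⊗n}` on `n`-tuples of self-adjoint matrices. -/
def LambdaPow (n N : ℕ) : Measure (Fin n → Mat N) :=
  Measure.map (fun f i => matOfCoord N (f i))
    (volume : Measure (Fin n → Fin N × Fin N → ℝ))

/-- Evaluation of a polynomial in `n` single variables at an `n`-tuple of matrices. -/
def evalSingle {n : ℕ} {N : ℕ} (A : Fin n → Mat N) :
    FAlg (gen fun _ : Fin n => 1) →ₐ[ℂ] Mat N :=
  evalA fun i (_ : Fin 1) => A i

/-- The set `((M_N(ℂ)^{sa})_R)^n`. -/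
def ballR (n N : ℕ) (R : ℝ) : Set (Fin n → Mat N) :=
  {A | ∀ i, (A i).IsHermitian ∧ opNorm (A i) ≤ R}

/-- The partition function `Z_{R,N}^h`. -/
def ZR (n N : ℕ) (R : ℝ) (h : FAlg (gen fun _ : Fin n => 1)) : ℝ :=
  ∫ A in ballR n N R,
    Real.exp (-(N : ℝ) ^ 2 * (trN N (evalSingle A h)).re) ∂(LambdaPow n N)

/-- The free pressure `π_R(h)`. -/
def piR (n : ℕ) (R : ℝ) (h : FAlg (gen fun _ : Fin n => 1)) : EReal :=
  Filter.limsup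
    (fun N : ℕ => ((((N : ℝ) ^ 2)⁻¹ : ℝ) : EReal) * ((Real.log (ZR n N R h) : ℝ) : EReal)
      + ((((n : ℝ) / 2 * Real.log N) : ℝ) : EReal))
    Filter.atTop

/-- The Gibbs micro-ensemble `λ_{R,N}^h`. -/
def lambdaGibbs (n N : ℕ) (R : ℝ) (h : FAlg (gen fun _ : Fin n => 1)) :
    Measure (Fin n → Mat N) :=
  ((LambdaPow n N).restrict (ballR n N R)).withDensity
    fun A => ENNReal.ofReal
      (Real.exp (-(N : ℝ) ^ 2 * (trN N (evalSingle A h)).re) / ZR n N R h)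

/-- The microstate free entropy `χ_R` of a single-variable functional. -/
def chiR1 (R : ℝ) (τ : FAlg (Fin 1) →ₗ[ℂ] ℂ) : EReal :=
  ⨅ (m : ℕ) (δ : ℝ) (_ : 0 < δ),
    Filter.limsup
      (fun N : ℕ => ((((N : ℝ) ^ 2)⁻¹ : ℝ) : EReal) *
          ENNReal.log (LambdaMat N {B : Mat N | (fun _ : Fin 1 => B) ∈ microSet R τ N m δ})
        + ((((1 : ℝ) / 2 * Real.log N) : ℝ) : EReal))
      Filter.atTop

/-- The microstate free entropy `χ_R` of a functional on `n` single variables. -/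
def chiRn (n : ℕ) (R : ℝ) (σ : FAlg (gen fun _ : Fin n => 1) →ₗ[ℂ] ℂ) : EReal :=
  ⨅ (m : ℕ) (δ : ℝ) (_ : 0 < δ),
    Filter.limsup
      (fun N : ℕ => ((((N : ℝ) ^ 2)⁻¹ : ℝ) : EReal) *
          ENNReal.log (LambdaPow n N
            {A : Fin n → Mat N | (fun i (_ : Fin 1) => A i) ∈ microFull R σ N m δ})
        + ((((n : ℝ) / 2 * Real.log N) : ℝ) : EReal))
      Filter.atTop

/-- The `η`-entropy `η_R(τ)`, the minus Legendre transform of the free pressure. -/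
def etaR (n : ℕ) (R : ℝ) (τ : FAlg (gen fun _ : Fin n => 1) →ₗ[ℂ] ℂ) : EReal :=
  ⨅ (h : FAlg (gen fun _ : Fin n => 1)) (_ : IsSA h),
    (((τ h).re : ℝ) : EReal) + piR n R h

/-! ### The doubled (tensor) orbital free pressure -/

/-- The algebraic tensor product `ℂ⟨x⟩ ⊗ ℂ⟨x⟩`. -/
abbrev TAlg (r : ι → ℕ) := TensorProduct ℂ (FAlg (gen r)) (FAlg (gen r))

/-- The functional `τ ⊗ τ` on `ℂ⟨x⟩ ⊗ ℂ⟨x⟩`. -/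
def tensFun {r : ι → ℕ} (τ : FAlg (gen r) →ₗ[ℂ] ℂ) : TAlg r →ₗ[ℂ] ℂ :=
  (TensorProduct.lid ℂ ℂ).toLinearMap ∘ₗ TensorProduct.map τ τ

/-- The normalized trace as a linear map. -/
def trLin (N : ℕ) : Mat N →ₗ[ℂ] ℂ := (N : ℂ)⁻¹ • Matrix.traceLinearMap (Fin N) ℂ ℂ

/-- The functional `tr_N ⊗ tr_N` on `M_N(ℂ) ⊗ M_N(ℂ)`. -/
def tr2 (N : ℕ) : TensorProduct ℂ (Mat N) (Mat N) →ₗ[ℂ] ℂ :=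
  (TensorProduct.lid ℂ ℂ).toLinearMap ∘ₗ TensorProduct.map (trLin N) (trLin N)

/-- Evaluation of `ℂ⟨x⟩ ⊗ ℂ⟨x⟩` at a family of matrix tuples. -/
def evalT {r : ι → ℕ} {N : ℕ} (A : ∀ i, Fin (r i) → Mat N) :
    TAlg r →ₐ[ℂ] TensorProduct ℂ (Mat N) (Mat N) :=
  Algebra.TensorProduct.map (evalA A) (evalA A)

/-- The finite-`N` doubled orbital free pressure `π^{(2)}_{orb,R}(p : (τ_i); N, m, δ)`. -/
def pi2OrbN (γ : ∀ N, Measure (UN N)) (R : ℝ) {r : ι → ℕ} (p : TAlg r)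
    (τs : ∀ i, FAlg (Fin (r i)) →ₗ[ℂ] ℂ) (N m : ℕ) (δ : ℝ) : EReal :=
  ⨆ A ∈ microProd R τs N m δ,
    ((Real.log (∫ V : ι → UN N,
        Real.exp (-(N : ℝ) ^ 2 * (tr2 N (evalT (conjFam V A) p)).re)
        ∂(Measure.pi fun _ => γ N)) : ℝ) : EReal)

/-- The doubled orbital free pressure `π^{(2)}_{orb,R}(p : (τ_i))`. -/
def pi2Orb (γ : ∀ N, Measure (UN N)) (R : ℝ) {r : ι → ℕ} (p : TAlg r)
    (τs : ∀ i, FAlg (Fin (r i)) →ₗ[ℂ] ℂ) : EReal :=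
  ⨅ (m : ℕ) (δ : ℝ) (_ : 0 < δ),
    Filter.limsup
      (fun N : ℕ => ((((N : ℝ) ^ 2)⁻¹ : ℝ) : EReal) * pi2OrbN γ R p τs N m δ)
      Filter.atTop

/-!
Given self-adjoint `h₁`, `h₂` in the two sub-systems of variables, `h := h₁ + h₂` is
self-adjoint with `τ(h) = τ(h₁) + τ(h₂)`. Its Gibbs weight factorizes over the two groups of
unitaries, so by Fubini the Haar integral defining `π_{orb,R}(h)` is the product of those of `h₁`
and `h₂`, while microstates for all `τ_i` are in particular microstates for each sub-system.
Hence `π_{orb,R}(h) ≤ π_{orb,R}(h₁) + π_{orb,R}(h₂)`, and taking infima over `h₁`, `h₂` gives the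
inequality. The `η`-entropies are `≤ π_{orb,R}(0) ≤ 0`, so no `⊤ + ⊥` occurs in `EReal`.
-/

section FreeStar

variable {X Y : Type}

def genMap (g : X → Y) : FAlg X →ₐ[ℂ] FAlg Y :=
  FreeAlgebra.lift ℂ fun x => FreeAlgebra.ι ℂ (g x)

@[simp] lemma genMap_ι (g : X → Y) (x : X) :
    genMap g (FreeAlgebra.ι ℂ x) = FreeAlgebra.ι ℂ (g x) :=
  FreeAlgebra.lift_ι_apply _ _

lemma star_genMap (g : X → Y) (p : FAlg X) : star (genMap g p) = genMap g (star p) := by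
  induction p using FreeAlgebra.induction with
  | grade0 c => simp only [AlgHom.commutes, FreeAlgebra.star_algebraMap]
  | grade1 x => simp only [genMap_ι, FreeAlgebra.star_ι]
  | mul a b ha hb => rw [map_mul, star_mul, star_mul, ha, hb, map_mul]
  | add a b ha hb => rw [map_add, star_add, star_add, ha, hb, map_add]

lemma coeff_equivMonoidAlgebraFreeMonoid_genMap (g : X → Y) (p : FAlg X) :
    (FreeAlgebra.equivMonoidAlgebraFreeMonoid (genMap g p)).coeff =
      Finsupp.mapDomain (FreeMonoid.map g)
        (FreeAlgebra.equivMonoidAlgebraFreeMonoid (R := ℂ) (X := X) p).coeff := by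
  have key : (FreeAlgebra.equivMonoidAlgebraFreeMonoid (R := ℂ) (X := Y)).toAlgHom.comp
        (genMap g) =
      (MonoidAlgebra.mapDomainAlgHom ℂ ℂ (FreeMonoid.map g)).comp
        (FreeAlgebra.equivMonoidAlgebraFreeMonoid (R := ℂ) (X := X)).toAlgHom := by
    apply FreeAlgebra.hom_ext
    funext x
    simp [genMap, FreeAlgebra.equivMonoidAlgebraFreeMonoid]
  rw [← AlgEquiv.coe_toAlgHom, ← AlgHom.comp_apply, key]
  rfl

lemma conjCoeff_genMap (g : X → Y) (p : FAlg X) :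
    conjCoeff (genMap g p) = genMap g (conjCoeff p) := by
  apply (FreeAlgebra.equivMonoidAlgebraFreeMonoid (R := ℂ) (X := Y)).injective
  apply MonoidAlgebra.coeff_injective
  rw [coeff_equivMonoidAlgebraFreeMonoid_genMap, conjCoeff, conjCoeff, AlgEquiv.apply_symm_apply,
    AlgEquiv.apply_symm_apply, MonoidAlgebra.coeff_ofCoeff, MonoidAlgebra.coeff_ofCoeff,
    coeff_equivMonoidAlgebraFreeMonoid_genMap,
    Finsupp.mapDomain_mapRange _ _ _ _ fun x y => map_add (starRingEnd ℂ) x y]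

lemma fstar_genMap (g : X → Y) (p : FAlg X) : fstar (genMap g p) = genMap g (fstar p) := by
  rw [fstar, conjCoeff_genMap, star_genMap, fstar]

lemma conjCoeff_add (p q : FAlg X) : conjCoeff (p + q) = conjCoeff p + conjCoeff q := by
  unfold conjCoeff
  rw [map_add, MonoidAlgebra.coeff_add,
    Finsupp.mapRange_add fun x y => map_add (starRingEnd ℂ) x y, MonoidAlgebra.ofCoeff_add,
    map_add]

lemma fstar_add (p q : FAlg X) : fstar (p + q) = fstar p + fstar q := by
  rw [fstar, conjCoeff_add, star_add, fstar, fstar]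

lemma isSA_zero : IsSA (0 : FAlg X) := by
  have h := fstar_add (0 : FAlg X) 0
  rwa [add_zero, left_eq_add] at h

lemma IsSA.add {p q : FAlg X} (hp : IsSA p) (hq : IsSA q) : IsSA (p + q) := by
  rw [IsSA, fstar_add, hp, hq]

end FreeStar

section SubSystem

variable {ι : Type} {r : ι → ℕ} (P : ι → Prop)

lemma inclSub_eq_genMap :
    inclSub (r := r) P = genMap fun p : gen (fun i : Subtype P => r i.1) => ⟨p.1.1, p.2⟩ :=
  rfl

lemma IsSA.inclSub {h : FAlg (gen fun i : Subtype P => r i.1)} (hs : IsSA h) :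
    IsSA (inclSub (r := r) P h) := by
  rw [IsSA, inclSub_eq_genMap, fstar_genMap, hs]

@[simp] lemma evalA_ι {N : ℕ} (B : ∀ i, Fin (r i) → Mat N) (x : gen r) :
    evalA B (FreeAlgebra.ι ℂ x) = B x.1 x.2 :=
  FreeAlgebra.lift_ι_apply _ _

lemma evalA_inclSub {N : ℕ} (B : ∀ i, Fin (r i) → Mat N)
    (p : FAlg (gen fun i : Subtype P => r i.1)) :
    evalA B (inclSub P p) = evalA (fun i : Subtype P => B i.1) p := by
  have key : (evalA B).comp (inclSub (r := r) P) = evalA fun i : Subtype P => B i.1 := by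
    apply FreeAlgebra.hom_ext
    funext x
    simp [inclSub, evalA]
  exact DFunLike.congr_fun key p

lemma restr_restrSub (τ : FAlg (gen r) →ₗ[ℂ] ℂ) (i : Subtype P) :
    restr (restrSub P τ) i = restr τ i.1 := by
  have key : (inclSub (r := r) P).comp (inclAlg (fun j : Subtype P => r j.1) i) =
      inclAlg r i.1 := by
    apply FreeAlgebra.hom_ext
    funext j
    simp [inclSub, inclAlg]
  rw [restr, restr, restrSub, LinearMap.comp_assoc, ← AlgHom.comp_toLinearMap, key]

lemma microSet_mono {κ : Type} (R : ℝ) (τ : FAlg κ →ₗ[ℂ] ℂ) (N : ℕ) {m m' : ℕ} {δ δ' : ℝ}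
    (hm : m' ≤ m) (hδ : δ ≤ δ') : microSet R τ N m δ ⊆ microSet R τ N m' δ' :=
  fun _ ⟨hnorm, hmom⟩ => ⟨hnorm, fun w hw hl => (hmom w hw (hl.trans hm)).trans_le hδ⟩

lemma microProd_restrSub {R : ℝ} {τ : FAlg (gen r) →ₗ[ℂ] ℂ} {N m m' : ℕ} {δ δ' : ℝ}
    {A : ∀ i, Fin (r i) → Mat N} (hA : A ∈ microProd R (restr τ) N m δ)
    (hm : m' ≤ m) (hδ : δ ≤ δ') :
    (fun i : Subtype P => A i.1) ∈ microProd R (restr (restrSub P τ)) N m' δ' := fun i => by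
  rw [restr_restrSub]
  exact microSet_mono R _ N hm hδ (hA i.1)

end SubSystem

section Integration

instance (N : ℕ) : SecondCountableTopology (Mat N) :=
  inferInstanceAs (SecondCountableTopology (Fin N → Fin N → ℂ))

instance (N : ℕ) : SecondCountableTopology (UN N) :=
  inferInstanceAs (SecondCountableTopology ((Matrix.unitaryGroup (Fin N) ℂ : Set (Mat N)) : Type))

lemma isCompact_setOf_norm_entry_le_one (N : ℕ) :
    IsCompact {U : Mat N | ∀ i j, ‖U i j‖ ≤ 1} := by
  have h := isCompact_univ_pi fun _ : Fin N =>
    isCompact_univ_pi fun _ : Fin N => isCompact_closedBall (0 : ℂ) 1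
  simp only [Set.pi, Metric.mem_closedBall, dist_zero_right, Set.mem_univ, true_implies] at h
  exact h

instance (N : ℕ) : CompactSpace (UN N) :=
  isCompact_iff_compactSpace.mp <|
    (isCompact_setOf_norm_entry_le_one N).of_isClosed_subset (isClosed_unitary (R := Mat N))
      fun _ hU => entry_norm_bound_of_unitary hU

lemma integral_pi_subtype_mul {ι : Type} [Fintype ι] {P Q : ι → Prop} [DecidablePred P]
    [DecidablePred Q] (hPQ : ∀ i, Q i ↔ ¬ P i)
    {X : Type} [MeasurableSpace X] (μ : Measure X) [SigmaFinite μ]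
    (F : (Subtype P → X) → ℝ) (G : (Subtype Q → X) → ℝ) :
    ∫ V : ι → X, F (fun i => V i.1) * G (fun j => V j.1) ∂(Measure.pi fun _ => μ) =
      (∫ x, F x ∂(Measure.pi fun _ => μ)) * ∫ y, G y ∂(Measure.pi fun _ => μ) := by
  classical
  let e : {i // ¬ P i} ≃ Subtype Q := Equiv.subtypeEquivRight fun i => (hPQ i).symm
  let Φ := (MeasurableEquiv.piEquivPiSubtypeProd (fun _ : ι => X) P).trans
    ((MeasurableEquiv.refl (Subtype P → X)).prodCongr
      (MeasurableEquiv.piCongrLeft (fun _ : Subtype Q => X) e))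
  have hΦ : MeasurePreserving Φ (Measure.pi fun _ => μ)
      ((Measure.pi fun _ : Subtype P => μ).prod (Measure.pi fun _ : Subtype Q => μ)) :=
    ((MeasurePreserving.id _).prod (measurePreserving_piCongrLeft (fun _ => μ) e)).comp
      (measurePreserving_piEquivPiSubtypeProd (fun _ => μ) P)
  have hΦV : ∀ V : ι → X, Φ V = ((fun i => V i.1), (fun j => V j.1)) := fun V => by
    ext j
    · rfl
    · exact Equiv.piCongrLeft_apply_apply (fun _ => X) e (fun i => V i.1) (e.symm j)
  rw [← integral_prod_mul F G, ← hΦ.integral_comp Φ.measurableEmbedding]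
  simp only [hΦV]

end Integration

section Pressure

variable {ι : Type} {r : ι → ℕ}
variable (γ : ∀ N, Measure (UN N)) [∀ N, IsProbabilityMeasure (γ N)] (R : ℝ)

lemma continuous_evalA_conjFam {N : ℕ} (A : ∀ i, Fin (r i) → Mat N) (h : FAlg (gen r)) :
    Continuous fun V : ι → UN N => evalA (conjFam V A) h := by
  induction h using FreeAlgebra.induction with
  | grade0 c =>
    simp only [AlgHom.commutes]
    exact continuous_const
  | grade1 x =>
    have hV : Continuous fun V : ι → UN N => (V x.1 : Mat N) :=
      continuous_subtype_val.comp (continuous_apply x.1)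
    simp only [evalA_ι, conjFam, Matrix.star_eq_conjTranspose]
    exact (hV.matrix_mul continuous_const).matrix_mul hV.matrix_conjTranspose
  | mul a b ha hb =>
    simp only [map_mul]
    exact ha.matrix_mul hb
  | add a b ha hb =>
    simp only [map_add]
    exact ha.add hb

lemma continuous_gibbsWt {N : ℕ} (h : FAlg (gen r)) (A : ∀ i, Fin (r i) → Mat N) :
    Continuous (gibbsWt h A) :=
  Real.continuous_exp.comp <| continuous_const.mul <| Complex.continuous_re.comp <|
    (continuous_evalA_conjFam A h).matrix_trace.div_const _

lemma integral_gibbsWt_pos [Fintype ι] {N : ℕ} (h : FAlg (gen r)) (A : ∀ i, Fin (r i) → Mat N) :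
    0 < ∫ V, gibbsWt h A V ∂(Measure.pi fun _ : ι => γ N) :=
  integral_exp_pos <|
    (continuous_gibbsWt h A).integrable_of_hasCompactSupport (.of_compactSpace _)

lemma gibbsWt_inclSub_add {P Q : ι → Prop} [DecidablePred P] [DecidablePred Q] {N : ℕ}
    (h₁ : FAlg (gen fun i : Subtype P => r i.1)) (h₂ : FAlg (gen fun i : Subtype Q => r i.1))
    (A : ∀ i, Fin (r i) → Mat N) (V : ι → UN N) :
    gibbsWt (inclSub P h₁ + inclSub Q h₂) A V =
      gibbsWt h₁ (fun i : Subtype P => A i.1) (fun i => V i.1) *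
        gibbsWt h₂ (fun j : Subtype Q => A j.1) (fun j => V j.1) := by
  rw [gibbsWt, gibbsWt, gibbsWt, ← Real.exp_add, map_add, evalA_inclSub, evalA_inclSub,
    trN, trN, trN, Matrix.trace_add, add_div, Complex.add_re, mul_add]
  rfl

lemma piOrbN_inclSub_add_le [Fintype ι] {P Q : ι → Prop} [DecidablePred P] [DecidablePred Q]
    (hPQ : ∀ i, Q i ↔ ¬ P i) (τ : FAlg (gen r) →ₗ[ℂ] ℂ)
    (h₁ : FAlg (gen fun i : Subtype P => r i.1)) (h₂ : FAlg (gen fun i : Subtype Q => r i.1))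
    (N m₁ m₂ : ℕ) (δ₁ δ₂ : ℝ) :
    piOrbN γ R (inclSub P h₁ + inclSub Q h₂) (restr τ) N (max m₁ m₂) (min δ₁ δ₂) ≤
      piOrbN γ R h₁ (restr (restrSub P τ)) N m₁ δ₁ +
        piOrbN γ R h₂ (restr (restrSub Q τ)) N m₂ δ₂ := by
  refine iSup₂_le fun A hA => ?_
  simp only [gibbsWt_inclSub_add, integral_pi_subtype_mul hPQ]
  rw [Real.log_mul (integral_gibbsWt_pos γ h₁ _).ne' (integral_gibbsWt_pos γ h₂ _).ne',
    EReal.coe_add]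
  exact add_le_add
    (le_iSup₂_of_le _ (microProd_restrSub P hA (le_max_left _ _) (min_le_left _ _)) le_rfl)
    (le_iSup₂_of_le _ (microProd_restrSub Q hA (le_max_right _ _) (min_le_right _ _)) le_rfl)

lemma piOrb_inclSub_add_le [Fintype ι] {P Q : ι → Prop} [DecidablePred P] [DecidablePred Q]
    (hPQ : ∀ i, Q i ↔ ¬ P i) (τ : FAlg (gen r) →ₗ[ℂ] ℂ)
    {h₁ : FAlg (gen fun i : Subtype P => r i.1)} {h₂ : FAlg (gen fun i : Subtype Q => r i.1)}
    (hh₁ : piOrb γ R h₁ (restr (restrSub P τ)) ≠ ⊤)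
    (hh₂ : piOrb γ R h₂ (restr (restrSub Q τ)) ≠ ⊤) :
    piOrb γ R (inclSub P h₁ + inclSub Q h₂) (restr τ) ≤
      piOrb γ R h₁ (restr (restrSub P τ)) + piOrb γ R h₂ (restr (restrSub Q τ)) := by
  refine EReal.le_add_of_forall_gt (.inr hh₂) (.inl hh₁) fun a ha b hb => ?_
  simp only [piOrb, gt_iff_lt, iInf_lt_iff] at ha hb
  obtain ⟨m₁, δ₁, hδ₁, hu⟩ := ha
  obtain ⟨m₂, δ₂, hδ₂, hv⟩ := hb
  refine iInf_le_of_le (max m₁ m₂) <| iInf_le_of_le (min δ₁ δ₂) <|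
    iInf_le_of_le (lt_min hδ₁ hδ₂) <|
      (limsup_le_limsup (.of_forall fun N => ?_)).trans (EReal.limsup_add_le_of_le hu hv.le)
  have hc : (0 : EReal) ≤ (((N : ℝ) ^ 2)⁻¹ : ℝ) := EReal.coe_nonneg.2 (by positivity)
  rw [Pi.add_apply, ← EReal.left_distrib_of_nonneg_of_ne_top hc (EReal.coe_ne_top _)]
  exact mul_le_mul_of_nonneg_left (piOrbN_inclSub_add_le γ R hPQ τ h₁ h₂ N m₁ m₂ δ₁ δ₂) hc

lemma piOrb_zero_le [Fintype ι] (τs : ∀ i, FAlg (Fin (r i)) →ₗ[ℂ] ℂ) :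
    piOrb γ R (0 : FAlg (gen r)) τs ≤ 0 := by
  have hN : ∀ N m δ, piOrbN γ R (0 : FAlg (gen r)) τs N m δ ≤ 0 := fun N m δ =>
    iSup₂_le fun A _ => by simp [gibbsWt, trN]
  refine iInf_le_of_le 0 <| iInf_le_of_le 1 <| iInf_le_of_le one_pos <|
    limsup_le_of_le (by isBoundedDefault) (.of_forall fun N => ?_)
  exact EReal.mul_nonpos_iff.2 (.inl ⟨EReal.coe_nonneg.2 (by positivity), hN N 0 1⟩)

lemma etaOrb_nonpos [Fintype ι] (τ : FAlg (gen r) →ₗ[ℂ] ℂ) : etaOrb γ R τ ≤ 0 :=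
  (iInf₂_le (0 : FAlg (gen r)) isSA_zero).trans <| by
    simpa only [map_zero, Complex.zero_re, EReal.coe_zero, zero_add] using piOrb_zero_le γ R _

lemma etaOrb_le_add [Fintype ι] {P Q : ι → Prop} [DecidablePred P] [DecidablePred Q]
    (hPQ : ∀ i, Q i ↔ ¬ P i) (τ : FAlg (gen r) →ₗ[ℂ] ℂ) :
    etaOrb γ R τ ≤ etaOrb γ R (restrSub P τ) + etaOrb γ R (restrSub Q τ) := by
  have hne : ∀ {κ : Type} [Fintype κ] {s : κ → ℕ} (σ : FAlg (gen s) →ₗ[ℂ] ℂ),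
      etaOrb γ R σ ≠ ⊤ := fun σ =>
    ((etaOrb_nonpos γ R σ).trans_lt EReal.zero_lt_top).ne
  refine EReal.le_add_of_forall_gt (.inr (hne _)) (.inl (hne _)) fun a ha b hb => ?_
  simp only [etaOrb, etaOrbRel, gt_iff_lt, iInf_lt_iff] at ha hb
  obtain ⟨h₁, hsa₁, hlt₁⟩ := ha
  obtain ⟨h₂, hsa₂, hlt₂⟩ := hb
  have hπ₁ : piOrb γ R h₁ (restr (restrSub P τ)) ≠ ⊤ := fun h => by
    simp [h] at hlt₁
  have hπ₂ : piOrb γ R h₂ (restr (restrSub Q τ)) ≠ ⊤ := fun h => by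
    simp [h] at hlt₂
  calc etaOrb γ R τ
      ≤ ((τ (inclSub P h₁ + inclSub Q h₂)).re : EReal) +
          piOrb γ R (inclSub P h₁ + inclSub Q h₂) (restr τ) :=
        iInf₂_le _ (hsa₁.inclSub P |>.add (hsa₂.inclSub Q))
    _ ≤ (((restrSub P τ h₁).re + (restrSub Q τ h₂).re : ℝ) : EReal) +
          (piOrb γ R h₁ (restr (restrSub P τ)) + piOrb γ R h₂ (restr (restrSub Q τ))) := by
        rw [map_add, Complex.add_re]
        exact add_le_add le_rfl (piOrb_inclSub_add_le γ R hPQ τ hπ₁ hπ₂)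
    _ = (((restrSub P τ h₁).re : EReal) + piOrb γ R h₁ (restr (restrSub P τ))) +
          (((restrSub Q τ h₂).re : EReal) + piOrb γ R h₂ (restr (restrSub Q τ))) := by
        rw [EReal.coe_add, add_add_add_comm]
    _ ≤ a + b := add_le_add hlt₁.le hlt₂.le

end Pressure

theorem statement7_general {n : ℕ} (r : Fin n → ℕ) (R : ℝ)
    (γ : ∀ N, Measure (UN N)) [∀ N, IsProbabilityMeasure (γ N)]
    (τ : FAlg (gen r) →ₗ[ℂ] ℂ)
    (n' : ℕ) :
    etaOrb γ R τ ≤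
      etaOrb γ R (restrSub (fun i : Fin n => (i : ℕ) < n') τ) +
        etaOrb γ R (restrSub (fun i : Fin n => n' ≤ (i : ℕ)) τ) :=
  etaOrb_le_add γ R (fun _ => not_lt.symm) τ

/-- Proposition 3.3 (3): subadditivity of the orbital `η`-entropy
with respect to splitting the variables into two sub-systems. -/
theorem statement7 {n : ℕ} (hn : 1 ≤ n) (r : Fin n → ℕ) (hr : ∀ i, 1 ≤ r i) (R : ℝ) (hR : 0 < R)
    (γ : ∀ N, Measure (UN N)) [∀ N, IsProbabilityMeasure (γ N)]
    (hγ : ∀ N, (γ N).IsMulLeftInvariant)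
    (τ : FAlg (gen r) →ₗ[ℂ] ℂ) (hτ : IsHermState τ)
    (n' : ℕ) (hn'1 : 1 ≤ n') (hn' : n' < n) :
    etaOrb γ R τ ≤
      etaOrb γ R (restrSub (fun i : Fin n => (i : ℕ) < n') τ) +
        etaOrb γ R (restrSub (fun i : Fin n => n' ≤ (i : ℕ)) τ) :=
  statement7_general r R γ τ n'

end OrbFP

end
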